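/- arXiv:0805.3087 — 3 statements merged into one kernel-verified Lean document; each statement's English description precedes it below -/
import Mathlib

section
/- (Proposition 1, zone III) Assume p₁ > 0, p₂ > 0, Y₁ ≥ p₁·q₁ and Y₂ ≥ p₂·q₂. Then the quadruple (α₀, β₀, γ₀, δ₀) = (q₁, 0, 0, q₂) is an expenditure-minimal Nash equilibrium, and every expenditure-minimal Nash equilibrium equals (q₁, 0, 0, q₂). -/
/-!
Swapping the roles of the two consumers (and of the two goods) maps the game to itself, so it
suffices to analyse consumer I. Buying the whole home supply `(q₁, 0)` is always affordable and
secures consumer I a payoff of at least `q₁`, whatever consumer II does; likewise consumer II is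
guaranteed `q₂`. Since the two consumers together can never obtain more than the total supply
`q₁ + q₂`, at every Nash equilibrium they get exactly `q₁` and `q₂`, and by expenditure-minimality
each spends at most the cost of buying the home supply. Buying abroad costs `ρ` more per unit than
buying the foreign good at home, so consumer I buys abroad only if `p₂ + ρ ≤ p₁`, and consumer II
only if `p₁ + ρ ≤ p₂`; as `ρ > 0`, one of them buys nothing abroad. That consumer then buys exactly
the home supply, which leaves nothing of it to the other, who is in turn forced to do the same.
-/

open Filter

noncomputable section

/-- Consumer I's strategy set. -/
def S1 (Y1 p1 p2 ρ a b : ℝ) : Prop :=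
  0 ≤ a ∧ 0 ≤ b ∧ a * p1 + b * (p2 + ρ) ≤ Y1

/-- Consumer II's strategy set. -/
def S2 (Y2 p1 p2 ρ c d : ℝ) : Prop :=
  0 ≤ c ∧ 0 ≤ d ∧ c * (p1 + ρ) + d * p2 ≤ Y2

/-- Consumer I's payoff. -/
def P1 (q1 q2 a b c d : ℝ) : ℝ := min a q1 + min b (max 0 (q2 - d))

/-- Consumer II's payoff. -/
def P2 (q1 q2 a b c d : ℝ) : ℝ := min d q2 + min c (max 0 (q1 - a))

/-- Nash equilibrium of the one-period game. -/
def NashEq (Y1 Y2 q1 q2 p1 p2 ρ a0 b0 c0 d0 : ℝ) : Prop :=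
  S1 Y1 p1 p2 ρ a0 b0 ∧ S2 Y2 p1 p2 ρ c0 d0 ∧
  (∀ a b, S1 Y1 p1 p2 ρ a b → P1 q1 q2 a b c0 d0 ≤ P1 q1 q2 a0 b0 c0 d0) ∧
  (∀ c d, S2 Y2 p1 p2 ρ c d → P2 q1 q2 a0 b0 c d ≤ P2 q1 q2 a0 b0 c0 d0)

/-- Expenditure-minimal Nash equilibrium (selection rule SR1). -/
def ExpMinNE (Y1 Y2 q1 q2 p1 p2 ρ a0 b0 c0 d0 : ℝ) : Prop :=
  NashEq Y1 Y2 q1 q2 p1 p2 ρ a0 b0 c0 d0 ∧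
  (∀ a b, S1 Y1 p1 p2 ρ a b → P1 q1 q2 a b c0 d0 = P1 q1 q2 a0 b0 c0 d0 →
    a0 * p1 + b0 * (p2 + ρ) ≤ a * p1 + b * (p2 + ρ)) ∧
  (∀ c d, S2 Y2 p1 p2 ρ c d → P2 q1 q2 a0 b0 c d = P2 q1 q2 a0 b0 c0 d0 →
    c0 * (p1 + ρ) + d0 * p2 ≤ c * (p1 + ρ) + d * p2)

def IsCheapestBestResponse (Y1 q1 q2 p1 p2 ρ c d a0 b0 : ℝ) : Prop :=
  S1 Y1 p1 p2 ρ a0 b0 ∧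
  (∀ a b, S1 Y1 p1 p2 ρ a b → P1 q1 q2 a b c d ≤ P1 q1 q2 a0 b0 c d) ∧
  (∀ a b, S1 Y1 p1 p2 ρ a b → P1 q1 q2 a b c d = P1 q1 q2 a0 b0 c d →
    a0 * p1 + b0 * (p2 + ρ) ≤ a * p1 + b * (p2 + ρ))

section Symmetry

variable {Y1 Y2 q1 q2 p1 p2 ρ a b c d : ℝ}

theorem P2_eq_P1_swap : P2 q1 q2 a b c d = P1 q2 q1 d c b a := rfl

theorem S2_iff_S1_swap : S2 Y2 p1 p2 ρ c d ↔ S1 Y2 p2 p1 ρ d c := by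
  simp only [S1, S2, add_comm (c * (p1 + ρ))]
  tauto

theorem expMinNE_iff :
    ExpMinNE Y1 Y2 q1 q2 p1 p2 ρ a b c d ↔
      IsCheapestBestResponse Y1 q1 q2 p1 p2 ρ c d a b ∧
      IsCheapestBestResponse Y2 q2 q1 p2 p1 ρ b a d c := by
  have hcost : ∀ c d : ℝ, c * (p1 + ρ) + d * p2 = d * p2 + c * (p1 + ρ) := fun _ _ => add_comm _ _
  simp only [ExpMinNE, NashEq, IsCheapestBestResponse, S2_iff_S1_swap, P2_eq_P1_swap, hcost]
  tauto

end Symmetry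

section ConsumerOne

variable {Y1 q1 q2 p1 p2 ρ a b c d : ℝ}

theorem P1_home_supply (q1 q2 c d : ℝ) : P1 q1 q2 q1 0 c d = q1 := by
  simp [P1]

theorem P1_of_le_foreign_demand (hd : q2 ≤ d) (hb : 0 ≤ b) :
    P1 q1 q2 a b c d = min a q1 := by
  simp [P1, max_eq_left (sub_nonpos.mpr hd), hb]

theorem S1_home_supply (hq1 : 0 ≤ q1) (h1 : p1 * q1 ≤ Y1) : S1 Y1 p1 p2 ρ q1 0 :=
  ⟨hq1, le_rfl, by linarith⟩

theorem P1_add_P2_le (q1 q2 a b c d : ℝ) :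
    P1 q1 q2 a b c d + P2 q1 q2 a b c d ≤ q1 + q2 := by
  have hI : min a q1 + max 0 (q1 - a) = q1 := by
    rcases le_total a q1 with h | h <;> simp [h]
  have hII : min d q2 + max 0 (q2 - d) = q2 := by
    rcases le_total d q2 with h | h <;> simp [h]
  simp only [P1, P2]
  linarith [min_le_right b (max 0 (q2 - d)), min_le_right c (max 0 (q1 - a))]

theorem isCheapestBestResponse_home_supply (hq1 : 0 ≤ q1) (hp1 : 0 ≤ p1) (hp2ρ : 0 ≤ p2 + ρ)
    (h1 : p1 * q1 ≤ Y1) (hd : q2 ≤ d) :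
    IsCheapestBestResponse Y1 q1 q2 p1 p2 ρ c d q1 0 := by
  refine ⟨S1_home_supply hq1 h1, ?_, ?_⟩
  · rintro a b ⟨-, hb, -⟩
    rw [P1_of_le_foreign_demand hd hb, P1_home_supply]
    exact min_le_right a q1
  · rintro a b ⟨-, hb, -⟩ heq
    rw [P1_of_le_foreign_demand hd hb, P1_home_supply, min_eq_right_iff] at heq
    nlinarith

theorem le_P1_of_isCheapestBestResponse (hq1 : 0 ≤ q1) (h1 : p1 * q1 ≤ Y1)
    (h : IsCheapestBestResponse Y1 q1 q2 p1 p2 ρ c d a b) : q1 ≤ P1 q1 q2 a b c d :=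
  (P1_home_supply q1 q2 c d).ge.trans (h.2.1 q1 0 (S1_home_supply hq1 h1))

theorem cost_le_of_isCheapestBestResponse (hq1 : 0 ≤ q1) (h1 : p1 * q1 ≤ Y1)
    (h : IsCheapestBestResponse Y1 q1 q2 p1 p2 ρ c d a b) (hP : P1 q1 q2 a b c d = q1) :
    a * p1 + b * (p2 + ρ) ≤ q1 * p1 := by
  simpa using h.2.2 q1 0 (S1_home_supply hq1 h1) (by rw [P1_home_supply, hP])

theorem eq_zero_or_le_of_P1_eq (hb : 0 ≤ b) (hP : P1 q1 q2 a b c d = q1)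
    (hcost : a * p1 + b * (p2 + ρ) ≤ q1 * p1) (hp1 : 0 < p1) : b = 0 ∨ p2 + ρ ≤ p1 := by
  have hsupply : q1 ≤ a + b := by
    rw [← hP, P1]
    linarith [min_le_left a q1, min_le_left b (max 0 (q2 - d))]
  rcases hb.eq_or_lt with hb0 | hbpos
  · exact Or.inl hb0.symm
  · right
    nlinarith

theorem eq_home_supply_of_P1_eq (hb : 0 ≤ b) (hP : P1 q1 q2 a b c d = q1)
    (hcost : a * p1 + b * (p2 + ρ) ≤ q1 * p1) (hp1 : 0 < p1) (hp2ρ : 0 < p2 + ρ)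
    (h : b = 0 ∨ q2 ≤ d) : a = q1 ∧ b = 0 := by
  have hP' : min a q1 = q1 := by
    rcases h with rfl | hd
    · simpa [P1] using hP
    · rwa [P1_of_le_foreign_demand hd hb] at hP
  have hqa : q1 ≤ a := min_eq_right_iff.mp hP'
  have hb0 : b = 0 := by nlinarith
  subst hb0
  exact ⟨le_antisymm (by nlinarith) hqa, rfl⟩

end ConsumerOne

theorem zoneIII_nash_general (Y1 Y2 q1 q2 ρ p1 p2 : ℝ)
    (hq1 : 0 < q1) (hq2 : 0 < q2) (hρ : 0 < ρ)
    (hp1 : 0 < p1) (hp2 : 0 < p2)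
    (h1 : p1 * q1 ≤ Y1) (h2 : p2 * q2 ≤ Y2) :
    ExpMinNE Y1 Y2 q1 q2 p1 p2 ρ q1 0 0 q2 ∧
    (∀ a0 b0 c0 d0 : ℝ, ExpMinNE Y1 Y2 q1 q2 p1 p2 ρ a0 b0 c0 d0 →
      a0 = q1 ∧ b0 = 0 ∧ c0 = 0 ∧ d0 = q2) := by
  have hp2ρ : 0 < p2 + ρ := by linarith
  have hp1ρ : 0 < p1 + ρ := by linarith
  refine ⟨expMinNE_iff.mpr
    ⟨isCheapestBestResponse_home_supply hq1.le hp1.le hp2ρ.le h1 le_rfl,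
      isCheapestBestResponse_home_supply hq2.le hp2.le hp1ρ.le h2 le_rfl⟩, ?_⟩
  intro a0 b0 c0 d0 h
  obtain ⟨hI, hII⟩ := expMinNE_iff.mp h
  have hsum := P1_add_P2_le q1 q2 a0 b0 c0 d0
  rw [P2_eq_P1_swap] at hsum
  have hgainI := le_P1_of_isCheapestBestResponse hq1.le h1 hI
  have hgainII := le_P1_of_isCheapestBestResponse hq2.le h2 hII
  have hPI : P1 q1 q2 a0 b0 c0 d0 = q1 := by linarith
  have hPII : P1 q2 q1 d0 c0 b0 a0 = q2 := by linarith
  have hcostI := cost_le_of_isCheapestBestResponse hq1.le h1 hI hPI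
  have hcostII := cost_le_of_isCheapestBestResponse hq2.le h2 hII hPII
  have homeI := eq_home_supply_of_P1_eq hI.1.2.1 hPI hcostI hp1 hp2ρ
  have homeII := eq_home_supply_of_P1_eq hII.1.2.1 hPII hcostII hp2 hp1ρ
  rcases eq_zero_or_le_of_P1_eq hI.1.2.1 hPI hcostI hp1 with hb0 | hpI
  · obtain ⟨rfl, rfl⟩ := homeI (Or.inl hb0)
    obtain ⟨rfl, rfl⟩ := homeII (Or.inr le_rfl)
    exact ⟨rfl, rfl, rfl, rfl⟩
  rcases eq_zero_or_le_of_P1_eq hII.1.2.1 hPII hcostII hp2 with hc0 | hpII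
  · obtain ⟨rfl, rfl⟩ := homeII (Or.inl hc0)
    obtain ⟨rfl, rfl⟩ := homeI (Or.inr le_rfl)
    exact ⟨rfl, rfl, rfl, rfl⟩
  linarith

/-- Proposition 1 (zone III): if `Y₁ ≥ p₁q₁` and `Y₂ ≥ p₂q₂`, then `(q₁,0,0,q₂)`
is the unique expenditure-minimal Nash equilibrium. -/
theorem zoneIII_nash (Y1 Y2 q1 q2 ρ p1 p2 : ℝ)
    (hY1 : 0 < Y1) (hY2 : 0 < Y2) (hq1 : 0 < q1) (hq2 : 0 < q2) (hρ : 0 < ρ)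
    (hp1 : 0 < p1) (hp2 : 0 < p2)
    (h1 : p1 * q1 ≤ Y1) (h2 : p2 * q2 ≤ Y2) :
    ExpMinNE Y1 Y2 q1 q2 p1 p2 ρ q1 0 0 q2 ∧
    (∀ a0 b0 c0 d0 : ℝ, ExpMinNE Y1 Y2 q1 q2 p1 p2 ρ a0 b0 c0 d0 →
      a0 = q1 ∧ b0 = 0 ∧ c0 = 0 ∧ d0 = q2) :=
  zoneIII_nash_general Y1 Y2 q1 q2 ρ p1 p2 hq1 hq2 hρ hp1 hp2 h1 h2
end
end

section
/- (Proposition 3, zones I-1/I-2, Δp > ρ) Assume p₁ > 0, p₂ > 0, p₁ > p₂ + ρ (i.e. Δp > ρ), 0 < Y₁ < p₁·q₁, 0 < Y₂ < p₂·q₂, and Y₁/p₂' + Y₂/p₂ ≥ q₂ (the point (Y₁, Y₂) lies on or above the line ℓ₂). Then the quadruple ((Y₁ − p₂'·(q₂ − Y₂/p₂))/p₁, q₂ − Y₂/p₂, 0, Y₂/p₂) is a Nash equilibrium. -/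
open Filter

/-! Consumer II spends his whole income on good 2, his local good, which is the cheaper one for
him and which he cannot exhaust. Consumer I takes the residual supply of good 2 and spends the
rest of his income on good 1. As `p₂' ≤ p₁`, moving money from good 2 to good 1 never buys him
more, and the extra good 2 he could want is not available; so both play best responses. -/

section Lemmas

variable {Y1 Y2 q1 q2 p1 p2 ρ : ℝ}

lemma add_le_add_of_budget {a m a0 b0 p p' : ℝ} (hp : 0 < p) (hp' : p' ≤ p) (hm : m ≤ b0)
    (hbudget : a * p + m * p' ≤ a0 * p + b0 * p') : a + m ≤ a0 + b0 := by
  have hshift : (a - a0) * p ≤ (b0 - m) * p :=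
    calc (a - a0) * p ≤ (b0 - m) * p' := by linarith
      _ ≤ (b0 - m) * p := mul_le_mul_of_nonneg_left hp' (sub_nonneg.2 hm)
  linarith [le_of_mul_le_mul_right hshift hp]

lemma P1_le_add_min {a b c d : ℝ} (hd : d ≤ q2) :
    P1 q1 q2 a b c d ≤ a + min b (q2 - d) := by
  rw [P1, max_eq_right (sub_nonneg.2 hd)]
  linarith [min_le_left a q1]

lemma P1_eq_add {a c d : ℝ} (ha : a ≤ q1) (hd : d ≤ q2) :
    P1 q1 q2 a (q2 - d) c d = a + (q2 - d) := by
  rw [P1, max_eq_right (sub_nonneg.2 hd), min_eq_left ha, min_self]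

lemma P1_le_of_S1 {a b a0 c d : ℝ} (hp1 : 0 < p1) (hp2ρ : 0 ≤ p2 + ρ) (hΔ : p2 + ρ ≤ p1)
    (hd : d ≤ q2) (hbudget : a0 * p1 + (q2 - d) * (p2 + ρ) = Y1) (hS : S1 Y1 p1 p2 ρ a b) :
    P1 q1 q2 a b c d ≤ a0 + (q2 - d) := by
  have hspend : a * p1 + min b (q2 - d) * (p2 + ρ) ≤ a0 * p1 + (q2 - d) * (p2 + ρ) :=
    calc a * p1 + min b (q2 - d) * (p2 + ρ) ≤ a * p1 + b * (p2 + ρ) := by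
          gcongr; exact min_le_left _ _
      _ ≤ a0 * p1 + (q2 - d) * (p2 + ρ) := hbudget ▸ hS.2.2
  exact (P1_le_add_min hd).trans
    (add_le_add_of_budget hp1 hΔ (min_le_right _ _) hspend)

lemma P2_le_div_of_S2 {a b c d : ℝ} (hp2 : 0 < p2) (hρp : p2 ≤ p1 + ρ)
    (hS : S2 Y2 p1 p2 ρ c d) : P2 q1 q2 a b c d ≤ Y2 / p2 := by
  obtain ⟨hc, -, hcd⟩ := hS
  have hspend : (c + d) * p2 ≤ Y2 :=
    calc (c + d) * p2 = c * p2 + d * p2 := add_mul c d p2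
      _ ≤ c * (p1 + ρ) + d * p2 := by gcongr
      _ ≤ Y2 := hcd
  rw [P2, le_div_iff₀ hp2]
  nlinarith [min_le_left d q2, min_le_left c (max 0 (q1 - a))]

lemma P2_zero_left {a b d : ℝ} (hd : d ≤ q2) : P2 q1 q2 a b 0 d = d := by
  rw [P2, min_eq_left hd, min_eq_left (le_max_left _ _), add_zero]

end Lemmas

theorem zoneI12_highgap_nash_general (Y1 Y2 q1 q2 ρ p1 p2 : ℝ)
    (hY2 : 0 < Y2) (hρ : 0 < ρ)
    (hp1 : 0 < p1) (hp2 : 0 < p2)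
    (hΔ : p2 + ρ < p1)
    (h1 : Y1 < p1 * q1) (h2 : Y2 < p2 * q2)
    (hl2 : Y1 / (p2 + ρ) + Y2 / p2 ≥ q2) :
    NashEq Y1 Y2 q1 q2 p1 p2 ρ ((Y1 - (p2 + ρ) * (q2 - Y2 / p2)) / p1)
      (q2 - Y2 / p2) 0 (Y2 / p2) := by
  have hp2ρ : 0 < p2 + ρ := by linarith
  set d0 := Y2 / p2
  set a0 := (Y1 - (p2 + ρ) * (q2 - d0)) / p1
  have hd0 : d0 ≤ q2 := (div_le_iff₀ hp2).2 (by linarith)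
  have hb0 : (p2 + ρ) * (q2 - d0) ≤ Y1 := by
    rw [← le_div_iff₀' hp2ρ]; linarith
  have hbudget : a0 * p1 + (q2 - d0) * (p2 + ρ) = Y1 := by
    rw [div_mul_cancel₀ _ hp1.ne']; ring
  have ha0q1 : a0 ≤ q1 := by
    rw [div_le_iff₀ hp1]; nlinarith [mul_nonneg hp2ρ.le (sub_nonneg.2 hd0)]
  refine ⟨⟨div_nonneg (sub_nonneg.2 hb0) hp1.le, sub_nonneg.2 hd0, hbudget.le⟩,
    ⟨le_rfl, div_nonneg hY2.le hp2.le, ?_⟩, fun a b hS => ?_, fun c d hS => ?_⟩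
  · rw [zero_mul, zero_add, div_mul_cancel₀ _ hp2.ne']
  · rw [P1_eq_add ha0q1 hd0]
    exact P1_le_of_S1 hp1 hp2ρ.le hΔ.le hd0 hbudget hS
  · rw [P2_zero_left hd0]
    exact P2_le_div_of_S2 hp2 (by linarith) hS

/-- Proposition 3 (zones I-1/I-2, `Δp > ρ`): the quadruple
`((Y₁ − p₂'(q₂ − Y₂/p₂))/p₁, q₂ − Y₂/p₂, 0, Y₂/p₂)` is a Nash equilibrium. -/
theorem zoneI12_highgap_nash (Y1 Y2 q1 q2 ρ p1 p2 : ℝ)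
    (hY1 : 0 < Y1) (hY2 : 0 < Y2) (hq1 : 0 < q1) (hq2 : 0 < q2) (hρ : 0 < ρ)
    (hp1 : 0 < p1) (hp2 : 0 < p2)
    (hΔ : p2 + ρ < p1)
    (h1 : Y1 < p1 * q1) (h2 : Y2 < p2 * q2)
    (hl2 : Y1 / (p2 + ρ) + Y2 / p2 ≥ q2) :
    NashEq Y1 Y2 q1 q2 p1 p2 ρ ((Y1 - (p2 + ρ) * (q2 - Y2 / p2)) / p1)
      (q2 - Y2 / p2) 0 (Y2 / p2) :=
  zoneI12_highgap_nash_general Y1 Y2 q1 q2 ρ p1 p2 hY2 hρ hp1 hp2 hΔ h1 h2 hl2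
end

section
/- (Proposition 4a, zone IV-1) Assume p₁ > 0, p₂ > 0, p₁·q₁ ≤ Y₁, 0 < Y₂ < p₂·q₂, and p₁·q₁ + p₂'·(q₂ − Y₂/p₂) ≤ Y₁ (the point (Y₁, Y₂) lies on or above the line ℓ₃). Then the quadruple (q₁, q₂ − Y₂/p₂, 0, Y₂/p₂) is an expenditure-minimal Nash equilibrium, and every expenditure-minimal Nash equilibrium equals it. -/
open Filter

noncomputable section

/-! In the candidate equilibrium consumer I takes all of good 1 and II spends its whole budget on
its local good 2, leaving `q₂ − Y₂/p₂` of it, which I can afford on or above `ℓ₃`. Conversely,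
if I left part of good 1 unbought in an equilibrium, both consumers would import while their
local good is not exhausted. Shifting budget from the imported to the local good is then
unprofitable for both only if `p₂ + ρ ≤ p₁` and `p₁ + ρ ≤ p₂`, which is impossible for `ρ > 0`.
Once I holds all of good 1, II's best response and expenditure minimality pin down the remaining
coordinates. -/

theorem le_and_le_of_min_add_min_eq {a b q m : ℝ} (h : min a q + min b m = q + m) :
    q ≤ a ∧ m ≤ b := by
  have ha := min_le_right a q
  have hb := min_le_right b m
  exact ⟨min_eq_right_iff.1 (by linarith), min_eq_right_iff.1 (by linarith)⟩

section Game

variable {Y1 Y2 q1 q2 p1 p2 ρ a b c d D : ℝ}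

theorem S1_iff_S2_swap : S1 Y1 p1 p2 ρ a b ↔ S2 Y1 p2 p1 ρ b a := by
  simp only [S1, S2]
  constructor <;> rintro ⟨h₁, h₂, h₃⟩ <;> exact ⟨h₂, h₁, by linarith⟩

theorem NashEq.swap (h : NashEq Y1 Y2 q1 q2 p1 p2 ρ a b c d) :
    NashEq Y2 Y1 q2 q1 p2 p1 ρ d c b a := by
  obtain ⟨hI, hII, hbestI, hbestII⟩ := h
  exact ⟨S1_iff_S2_swap.2 hII, S1_iff_S2_swap.1 hI,
    fun x y hxy => hbestII y x (S1_iff_S2_swap.1 hxy),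
    fun x y hxy => hbestI y x (S1_iff_S2_swap.2 hxy)⟩

/-- Trading `s·p₂` units of the import for `s·(p₁ + ρ)` units of the local good keeps the
expenditure and, if `p₂ < p₁ + ρ`, raises the payoff. -/
theorem NashEq.add_ρ_le_of_imports (h : NashEq Y1 Y2 q1 q2 p1 p2 ρ a b c d) (hp2 : 0 < p2)
    (hd : d < q2) (hc : 0 < c) : p1 + ρ ≤ p2 := by
  by_contra! hlt
  obtain ⟨-, ⟨-, hd0, hbudget⟩, -, hbest⟩ := h
  have hp1ρ : 0 < p1 + ρ := hp2.trans hlt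
  set s := min (c / p2) ((q2 - d) / (p1 + ρ))
  have hs : 0 < s := lt_min (div_pos hc hp2) (div_pos (by linarith) hp1ρ)
  have hsc : s * p2 ≤ c := (le_div_iff₀ hp2).1 (min_le_left _ _)
  have hsd : s * (p1 + ρ) ≤ q2 - d := (le_div_iff₀ hp1ρ).1 (min_le_right _ _)
  have hfeas : S2 Y2 p1 p2 ρ (c - s * p2) (d + s * (p1 + ρ)) :=
    ⟨by linarith, by positivity, by linear_combination hbudget⟩
  have hgain : P2 q1 q2 a b c d + s * (p1 + ρ - p2) ≤
      P2 q1 q2 a b (c - s * p2) (d + s * (p1 + ρ)) := by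
    have hloss : min c (max 0 (q1 - a)) - s * p2 ≤ min (c - s * p2) (max 0 (q1 - a)) := by
      rw [← min_sub_sub_right]
      exact min_le_min_left _ (sub_le_self _ (by positivity))
    simp only [P2, min_eq_left hd.le, min_eq_left (show d + s * (p1 + ρ) ≤ q2 by linarith)]
    linarith
  linarith [hbest _ _ hfeas, mul_pos hs (sub_pos.2 hlt)]

theorem S2.le_of_budget (h : S2 (p2 * D) p1 p2 ρ c d) (hp2 : 0 < p2) (hp1ρ : 0 ≤ p1 + ρ) :
    d ≤ D := by
  obtain ⟨hc, -, hbudget⟩ := h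
  nlinarith [mul_nonneg hc hp1ρ]

theorem P2_eq_min_of_le (ha : q1 ≤ a) (hc : 0 ≤ c) : P2 q1 q2 a b c d = min d q2 := by
  simp [P2, max_eq_left (sub_nonpos.2 ha), min_eq_right hc]

theorem expMinNE_zoneIV1 (hρ : 0 ≤ ρ) (hp1 : 0 ≤ p1) (hp2 : 0 < p2) (hq1 : 0 ≤ q1)
    (hY2 : p2 * D = Y2) (hD : 0 ≤ D) (hDq : D ≤ q2)
    (hl3 : p1 * q1 + (p2 + ρ) * (q2 - D) ≤ Y1) :
    ExpMinNE Y1 Y2 q1 q2 p1 p2 ρ q1 (q2 - D) 0 D := by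
  subst hY2
  have hPI : P1 q1 q2 q1 (q2 - D) 0 D = q1 + (q2 - D) := by simp [P1, hDq]
  have hPII : P2 q1 q2 q1 (q2 - D) 0 D = D := by simp [P2, hDq]
  refine ⟨⟨⟨hq1, by linarith, by linarith⟩, ⟨le_rfl, hD, by linarith⟩, fun x y _ => ?_,
    fun x y hxy => ?_⟩, fun x y _ hP => ?_, fun x y hxy hP => ?_⟩
  · have hx := min_le_right x q1
    have hy := min_le_right y (max 0 (q2 - D))
    rw [hPI, P1]
    rw [max_eq_right (sub_nonneg.2 hDq)] at hy ⊢
    linarith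
  · rw [hPII, P2_eq_min_of_le le_rfl hxy.1]
    exact (min_le_left _ _).trans (hxy.le_of_budget hp2 (by linarith))
  · rw [hPI, P1, max_eq_right (sub_nonneg.2 hDq)] at hP
    obtain ⟨hx, hy⟩ := le_and_le_of_min_add_min_eq hP
    nlinarith
  · rw [hPII, P2_eq_min_of_le le_rfl hxy.1] at hP
    have hy : D ≤ y := hP ▸ min_le_left y q2
    nlinarith [hxy.1]

theorem ExpMinNE.eq_zoneIV1 (hρ : 0 < ρ) (hp1 : 0 < p1) (hp2 : 0 < p2) (hq1 : 0 ≤ q1)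
    (hY2 : p2 * D = Y2) (hD : 0 ≤ D) (hDq : D ≤ q2)
    (hl3 : p1 * q1 + (p2 + ρ) * (q2 - D) ≤ Y1) (h : ExpMinNE Y1 Y2 q1 q2 p1 p2 ρ a b c d) :
    a = q1 ∧ b = q2 - D ∧ c = 0 ∧ d = D := by
  subst hY2
  obtain ⟨-, hII, hbestI, hbestII⟩ := h.1
  have hdD : d ≤ D := hII.le_of_budget hp2 (by linarith)
  have hfeasI : S1 Y1 p1 p2 ρ q1 (q2 - D) := ⟨hq1, by linarith, by linarith⟩
  have hPI : P1 q1 q2 q1 (q2 - D) c d = q1 + (q2 - D) := by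
    simp [P1, max_eq_right (show 0 ≤ q2 - d by linarith), show q2 - D ≤ q2 - d by linarith]
  have hI_ge : q1 + (q2 - D) ≤ P1 q1 q2 a b c d := hPI ▸ hbestI _ _ hfeasI
  have hII_ge : D ≤ P2 q1 q2 a b c d := by
    have hPII : P2 q1 q2 a b 0 D = D := by simp [P2, hDq]
    exact hPII ▸ hbestII 0 D ⟨le_rfl, hD, by linarith⟩
  have hqa : q1 ≤ a := by
    by_contra! haq
    simp only [P1, P2, max_eq_right (show 0 ≤ q2 - d by linarith)] at hI_ge hII_ge
    have hIa := min_le_left a q1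
    have hIb := min_le_left b (q2 - d)
    have hIb' := min_le_right b (q2 - d)
    have hIId := min_le_left d q2
    have hIIc := min_le_left c (max 0 (q1 - a))
    have hpI := h.1.swap.add_ρ_le_of_imports hp1 haq (by linarith)
    have hpII := h.1.add_ρ_le_of_imports hp2 (by linarith) (by linarith)
    linarith
  have hdeq : d = D := by
    have := hII_ge.trans_eq (P2_eq_min_of_le hqa hII.1)
    exact le_antisymm hdD (this.trans (min_le_left _ _))
  subst hdeq
  have hceq : c = 0 := by
    obtain ⟨hc, -, hbudget⟩ := hII
    nlinarith [mul_nonneg hc (show 0 ≤ p1 + ρ by linarith)]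
  rw [P1, min_eq_right hqa, max_eq_right (sub_nonneg.2 hDq)] at hI_ge
  have hBb : q2 - d ≤ b := min_eq_right_iff.1 (le_antisymm (min_le_right _ _) (by linarith))
  have hPeq : P1 q1 q2 a b c d = q1 + (q2 - d) := by
    rw [P1, min_eq_right hqa, max_eq_right (sub_nonneg.2 hDq), min_eq_right hBb]
  have hexp := h.2.1 _ _ hfeasI (hPI.trans hPeq.symm)
  exact ⟨by nlinarith, by nlinarith, hceq, rfl⟩

end Game

theorem zoneIV1_nash_general (Y1 Y2 q1 q2 ρ p1 p2 : ℝ)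
    (hY2 : 0 < Y2) (hq1 : 0 < q1) (hρ : 0 < ρ)
    (hp1 : 0 < p1) (hp2 : 0 < p2)
    (h2 : Y2 < p2 * q2)
    (hl3 : p1 * q1 + (p2 + ρ) * (q2 - Y2 / p2) ≤ Y1) :
    ExpMinNE Y1 Y2 q1 q2 p1 p2 ρ q1 (q2 - Y2 / p2) 0 (Y2 / p2) ∧
    (∀ a0 b0 c0 d0 : ℝ, ExpMinNE Y1 Y2 q1 q2 p1 p2 ρ a0 b0 c0 d0 →
      a0 = q1 ∧ b0 = q2 - Y2 / p2 ∧ c0 = 0 ∧ d0 = Y2 / p2) := by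
  have hY2D : p2 * (Y2 / p2) = Y2 := mul_div_cancel₀ Y2 hp2.ne'
  have hD : 0 ≤ Y2 / p2 := by positivity
  have hDq : Y2 / p2 ≤ q2 := (div_le_iff₀' hp2).2 h2.le
  exact ⟨expMinNE_zoneIV1 hρ.le hp1.le hp2 hq1.le hY2D hD hDq hl3,
    fun a0 b0 c0 d0 h => h.eq_zoneIV1 hρ hp1 hp2 hq1.le hY2D hD hDq hl3⟩

/-- Proposition 4a (zone IV-1): the quadruple `(q₁, q₂ − Y₂/p₂, 0, Y₂/p₂)` is the
unique expenditure-minimal Nash equilibrium. -/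
theorem zoneIV1_nash (Y1 Y2 q1 q2 ρ p1 p2 : ℝ)
    (hY1 : 0 < Y1) (hY2 : 0 < Y2) (hq1 : 0 < q1) (hq2 : 0 < q2) (hρ : 0 < ρ)
    (hp1 : 0 < p1) (hp2 : 0 < p2)
    (h1 : p1 * q1 ≤ Y1) (h2 : Y2 < p2 * q2)
    (hl3 : p1 * q1 + (p2 + ρ) * (q2 - Y2 / p2) ≤ Y1) :
    ExpMinNE Y1 Y2 q1 q2 p1 p2 ρ q1 (q2 - Y2 / p2) 0 (Y2 / p2) ∧
    (∀ a0 b0 c0 d0 : ℝ, ExpMinNE Y1 Y2 q1 q2 p1 p2 ρ a0 b0 c0 d0 →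
      a0 = q1 ∧ b0 = q2 - Y2 / p2 ∧ c0 = 0 ∧ d0 = Y2 / p2) :=
  zoneIV1_nash_general Y1 Y2 q1 q2 ρ p1 p2 hY2 hq1 hρ hp1 hp2 h2 hl3
end
end
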